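/- Let (u, ρ) be a smooth solution of the prescribed curvature flow on [0, T) for smooth positive data f (on the closed unit disc) and j (on the unit circle). Then the total quantity m(t) = ½∫_B e^{2u(·,t)} dz + ∫_{∂B} e^{u(·,t)} ds₀ is constant in t; that is, dm/dt = 0 for all 0 < t < T. -/

import Mathlib

open MeasureTheory Metric Set Filter
open scoped Real Topology ENNReal

noncomputable section

/-- The closed unit disc in `ℂ ≅ ℝ²`. -/
def cdisc : Set ℂ := Metric.closedBall 0 1

/-- The open unit disc `B`. -/
def odisc : Set ℂ := Metric.ball 0 1

/-- The unit circle `∂B`. -/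
def bdry : Set ℂ := Metric.sphere 0 1

/-- The boundary point with angle `θ`. -/
def bpt (θ : ℝ) : ℂ := Complex.exp ((θ : ℂ) * Complex.I)

/-- Boundary integral with respect to arclength `ds₀`. -/
def circInt (φ : ℂ → ℝ) : ℝ := ∫ θ in (0:ℝ)..(2 * Real.pi), φ (bpt θ)

/-- Integral over the open unit disc with respect to Lebesgue measure. -/
def ballInt (φ : ℂ → ℝ) : ℝ := ∫ z in odisc, φ z

/-- Outward normal derivative `∂w/∂ν₀(z) = z·∇w(z)` for `z ∈ ∂B`. -/
def nder (w : ℂ → ℝ) (z : ℂ) : ℝ := fderivWithin ℝ w cdisc z z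

/-- The Euclidean Laplacian, computed with derivatives within the closed disc. -/
def lapW (w : ℂ → ℝ) (z : ℂ) : ℝ :=
  fderivWithin ℝ (fun x => fderivWithin ℝ w cdisc x 1) cdisc z 1 +
  fderivWithin ℝ (fun x => fderivWithin ℝ w cdisc x Complex.I) cdisc z Complex.I

/-- The coefficient `α(t) = 2ρ(t)/∫_B f e^{2u(·,t)} dz`. -/
def alphaC (f : ℂ → ℝ) (u : ℂ → ℝ → ℝ) (ρ : ℝ → ℝ) (t : ℝ) : ℝ :=
  2 * ρ t / ballInt fun z => f z * Real.exp (2 * u z t)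

/-- The coefficient `β(t) = 2(π − ρ(t))/∫_{∂B} j e^{u(·,t)} ds₀`. -/
def betaC (j : ℂ → ℝ) (u : ℂ → ℝ → ℝ) (ρ : ℝ → ℝ) (t : ℝ) : ℝ :=
  2 * (Real.pi - ρ t) / circInt fun z => j z * Real.exp (u z t)

/-- The time domain `[0, T)` (with `T ∈ (0, ∞]`). -/
def flowDom (T : ℝ≥0∞) : Set ℝ := {t : ℝ | 0 ≤ t ∧ ENNReal.ofReal t < T}

/-- `(u, ρ)` is a smooth solution of the prescribed curvature flow on `[0, T)`:
`∂u/∂t = α f + e^{−2u} Δu` in `B`, `∂u/∂t = β j − e^{−u}(∂u/∂ν₀ + 1)` on `∂B`,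
and `dρ/dt = log (β²/α)`, with `u` smooth on `closure B × [0,T)` and `ρ` C¹ with
values in `(0, π)`. -/
def IsFlow (f j : ℂ → ℝ) (T : ℝ≥0∞) (u : ℂ → ℝ → ℝ) (ρ : ℝ → ℝ) : Prop :=
  ContDiffOn ℝ (⊤ : ℕ∞) (fun p : ℂ × ℝ => u p.1 p.2) (cdisc ×ˢ flowDom T) ∧
  ContDiffOn ℝ 1 ρ (flowDom T) ∧
  (∀ t ∈ flowDom T, ρ t ∈ Set.Ioo 0 Real.pi) ∧
  (∀ t ∈ flowDom T, 0 < t → ∀ z ∈ odisc,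
    deriv (u z) t = alphaC f u ρ t * f z + Real.exp (-(2 * u z t)) * lapW (fun w => u w t) z) ∧
  (∀ t ∈ flowDom T, 0 < t → ∀ z ∈ bdry,
    deriv (u z) t = betaC j u ρ t * j z - Real.exp (-(u z t)) * (nder (fun w => u w t) z + 1)) ∧
  (∀ t ∈ flowDom T, 0 < t →
    deriv ρ t = Real.log (betaC j u ρ t ^ 2 / alphaC f u ρ t))

/-!
Differentiating under the integral sign, `m'(t) = ∫_B u_t e^{2u} dz + ∫_{∂B} u_t e^u ds₀`.
Substituting the flow equations, the normalisations of `α` and `β` turn the source terms into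
`2ρ` and `2(π - ρ)`, the `-1` in the boundary equation contributes `-2π`, and what remains is
`∫_B Δu - ∫_{∂B} ∂u/∂ν₀`, which vanishes by Green's identity. The latter is proved in polar
coordinates, where `r Δw` is a sum of an `r`-derivative and a `θ`-derivative.
-/

lemma odisc_subset_cdisc : odisc ⊆ cdisc := ball_subset_closedBall

lemma bdry_subset_cdisc : bdry ⊆ cdisc := sphere_subset_closedBall

lemma measurableSet_odisc : MeasurableSet odisc := measurableSet_ball

lemma isCompact_cdisc : IsCompact cdisc := isCompact_closedBall _ _

lemma uniqueDiffOn_cdisc : UniqueDiffOn ℝ cdisc :=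
  uniqueDiffOn_convex (convex_closedBall _ _)
    (by rw [cdisc, interior_closedBall (0 : ℂ) one_ne_zero]; exact ⟨0, mem_ball_self one_pos⟩)

lemma norm_bpt (θ : ℝ) : ‖bpt θ‖ = 1 := by
  simp [bpt, Complex.norm_exp_ofReal_mul_I]

lemma bpt_mem_bdry (θ : ℝ) : bpt θ ∈ bdry := by
  simp [bdry, norm_bpt]

lemma ofReal_mul_bpt_mem_cdisc {r : ℝ} (hr : |r| ≤ 1) (θ : ℝ) : (r : ℂ) * bpt θ ∈ cdisc := by
  simpa [cdisc, norm_bpt] using hr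

lemma ofReal_mul_bpt_mem_odisc {r : ℝ} (hr : |r| < 1) (θ : ℝ) : (r : ℂ) * bpt θ ∈ odisc := by
  simpa [odisc, norm_bpt] using hr

lemma contDiff_bpt : ContDiff ℝ ⊤ bpt :=
  Complex.contDiff_exp.comp (Complex.ofRealCLM.contDiff.mul contDiff_const)

lemma hasDerivAt_bpt (θ : ℝ) : HasDerivAt bpt (Complex.I * bpt θ) θ := by
  have h := ((Complex.ofRealCLM.hasDerivAt (x := θ)).mul_const Complex.I).cexp
  simp only [Complex.ofRealCLM_apply, Complex.ofReal_one, one_mul] at h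
  rw [mul_comm]
  exact h

lemma bpt_periodic : Function.Periodic bpt (2 * π) := fun θ => by
  simp only [bpt, Complex.ofReal_add, add_mul, Complex.exp_add, Complex.ofReal_mul,
    Complex.ofReal_ofNat, Complex.exp_two_pi_mul_I, mul_one]

lemma bpt_neg_pi : bpt (-π) = bpt π := by
  simp [bpt, Complex.exp_neg, Complex.exp_pi_mul_I]

lemma bpt_eq_cos_add_sin (θ : ℝ) : bpt θ = Real.cos θ • (1 : ℂ) + Real.sin θ • Complex.I := by
  simp [bpt, Complex.exp_mul_I, ← Complex.ofReal_cos, ← Complex.ofReal_sin]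

lemma ContinuousOn.comp_bpt {X : Type*} [TopologicalSpace X] {g : ℂ → X}
    (hg : ContinuousOn g bdry) : Continuous fun θ => g (bpt θ) :=
  hg.comp_continuous contDiff_bpt.continuous bpt_mem_bdry

lemma ContinuousOn.integrableOn_odisc {g : ℂ → ℝ} (hg : ContinuousOn g cdisc) :
    IntegrableOn g odisc :=
  (hg.integrableOn_compact isCompact_cdisc).mono_set odisc_subset_cdisc

lemma ballInt_pos {g : ℂ → ℝ} (hg : ContinuousOn g cdisc) (hpos : ∀ z ∈ odisc, 0 < g z) :
    0 < ballInt g := by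
  rw [ballInt, setIntegral_pos_iff_support_of_nonneg_ae
    ((ae_restrict_iff' measurableSet_odisc).2 (ae_of_all _ fun z hz => (hpos z hz).le))
    hg.integrableOn_odisc]
  refine (measure_ball_pos volume 0 one_pos).trans_le (measure_mono fun z hz => ?_)
  exact ⟨(hpos z hz).ne', hz⟩

lemma circInt_pos {g : ℂ → ℝ} (hg : ContinuousOn g bdry) (hpos : ∀ z ∈ bdry, 0 < g z) :
    0 < circInt g :=
  intervalIntegral.intervalIntegral_pos_of_pos_on (hg.comp_bpt.intervalIntegrable _ _)
    (fun θ _ => hpos _ (bpt_mem_bdry θ)) Real.two_pi_pos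

lemma ContinuousOn.slice {α β X : Type*} [TopologicalSpace α] [TopologicalSpace β]
    [TopologicalSpace X] {g : α × β → X} {K : Set α} {Ω : Set β} (hg : ContinuousOn g (K ×ˢ Ω))
    {s : β} (hs : s ∈ Ω) : ContinuousOn (fun x => g (x, s)) K :=
  hg.comp (continuous_id.prodMk continuous_const).continuousOn fun _ hx => ⟨hx, hs⟩

section TimeDerivative

variable {E : Type*} [NormedAddCommGroup E] [NormedSpace ℝ E] {U : E → ℝ → ℝ}
  {K : Set E} {Ω : Set ℝ}

lemma hasDerivAt_of_contDiffOn_prod (hΩ : IsOpen Ω)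
    (hU : ContDiffOn ℝ 1 (fun p : E × ℝ => U p.1 p.2) (K ×ˢ Ω)) {x : E} (hx : x ∈ K) {s : ℝ}
    (hs : s ∈ Ω) :
    HasDerivAt (U x) (fderivWithin ℝ (fun p : E × ℝ => U p.1 p.2) (K ×ˢ Ω) (x, s) (0, 1)) s := by
  have hU' := ((hU.differentiableOn one_ne_zero) (x, s) ⟨hx, hs⟩).hasFDerivWithinAt
  have hslice : HasDerivWithinAt (fun s' : ℝ => (x, s')) ((0 : E), (1 : ℝ)) Ω s :=
    ((hasDerivAt_const s x).prodMk (hasDerivAt_id s)).hasDerivWithinAt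
  exact (hU'.comp_hasDerivWithinAt s hslice fun s' hs' => ⟨hx, hs'⟩).hasDerivAt
    (hΩ.mem_nhds hs)

theorem hasDerivAt_setIntegral_of_contDiffOn [MeasurableSpace E] [OpensMeasurableSpace E]
    {μ : Measure E} [IsFiniteMeasureOnCompacts μ] {A : Set E} (hK : IsCompact K)
    (hKu : UniqueDiffOn ℝ K) (hA : MeasurableSet A) (hAK : A ⊆ K) (hΩ : IsOpen Ω)
    (hU : ContDiffOn ℝ 1 (fun p : E × ℝ => U p.1 p.2) (K ×ˢ Ω)) {t : ℝ} (ht : t ∈ Ω) :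
    HasDerivAt (fun s => ∫ x in A, U x s ∂μ) (∫ x in A, deriv (U x) t ∂μ) t := by
  set U' : E × ℝ → ℝ := fun p => fderivWithin ℝ (fun p : E × ℝ => U p.1 p.2) (K ×ˢ Ω) p (0, 1)
  have hU'c : ContinuousOn U' (K ×ˢ Ω) :=
    (hU.continuousOn_fderivWithin (hKu.prod hΩ.uniqueDiffOn) le_rfl).clm_apply continuousOn_const
  obtain ⟨ε, hε, hεΩ⟩ := Metric.nhds_basis_closedBall.mem_iff.1 (hΩ.mem_nhds ht)
  obtain ⟨C, hC⟩ := (hK.prod (isCompact_closedBall t ε)).exists_bound_of_continuousOn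
    (hU'c.mono (prod_mono subset_rfl hεΩ))
  have hμA : μ A < ⊤ := (measure_mono hAK).trans_lt hK.measure_lt_top
  have hderiv : ∀ x ∈ K, ∀ s ∈ Ω, HasDerivAt (U x) (U' (x, s)) s := fun x hx s hs =>
    hasDerivAt_of_contDiffOn_prod hΩ hU hx hs
  have hdominated := hasDerivAt_integral_of_dominated_loc_of_deriv_le (μ := μ.restrict A)
    (F := fun s x => U x s) (F' := fun s x => U' (x, s)) (bound := fun _ => C)
    (ball_mem_nhds t hε)
    (eventually_of_mem (hΩ.mem_nhds ht) fun s hs =>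
      ((hU.continuousOn.slice hs).mono hAK).aestronglyMeasurable hA)
    (((hU.continuousOn.slice ht).integrableOn_compact hK).mono_set hAK)
    (((hU'c.slice ht).mono hAK).aestronglyMeasurable hA)
    ((ae_restrict_iff' hA).2 (ae_of_all _ fun x hx s hs =>
      hC (x, s) ⟨hAK hx, ball_subset_closedBall hs⟩))
    (integrableOn_const hμA.ne)
    ((ae_restrict_iff' hA).2 (ae_of_all _ fun x hx s hs =>
      hderiv x (hAK hx) s (hεΩ (ball_subset_closedBall hs))))
  rw [setIntegral_congr_fun hA fun x hx => (hderiv x (hAK hx) t ht).deriv]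
  exact hdominated.2

end TimeDerivative

theorem setIntegral_odisc_eq_polar (g : ℂ → ℝ) :
    ∫ z in odisc, g z = ∫ p in Ioo (0 : ℝ) 1 ×ˢ Ioo (-π) π, p.1 * g (p.1 * bpt p.2) := by
  have hsymm : ∀ p : ℝ × ℝ, Complex.polarCoord.symm p = p.1 * bpt p.2 := fun p => by
    simp [Complex.polarCoord_symm_apply, bpt, Complex.exp_mul_I, ← Complex.ofReal_cos,
      ← Complex.ofReal_sin]
  have hrect : Ioo (0 : ℝ) 1 ×ˢ Ioo (-π) π = polarCoord.target ∩ {p : ℝ × ℝ | p.1 < 1} := by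
    ext p
    simp only [polarCoord_target, mem_inter_iff, mem_prod, mem_Ioi, mem_Ioo]
    tauto
  rw [← integral_indicator measurableSet_odisc, ← Complex.integral_comp_polarCoord_symm, hrect,
    ← setIntegral_indicator (measurableSet_lt measurable_fst measurable_const)]
  refine setIntegral_congr_fun polarCoord.open_target.measurableSet fun p hp => ?_
  rw [polarCoord_target] at hp
  have hmem : p.1 * bpt p.2 ∈ odisc ↔ p.1 < 1 := by
    simp [odisc, norm_bpt, abs_of_pos (show (0 : ℝ) < p.1 from hp.1)]
  by_cases h : p.1 < 1 <;> simp [hsymm, indicator, hmem, h]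

lemma bilinear_diag_bpt_add (H : ℂ →L[ℝ] ℂ →L[ℝ] ℝ) (θ : ℝ) :
    H (bpt θ) (bpt θ) + H (Complex.I * bpt θ) (Complex.I * bpt θ) =
      H 1 1 + H Complex.I Complex.I := by
  have hI : Complex.I * bpt θ = (-Real.sin θ) • (1 : ℂ) + Real.cos θ • Complex.I := by
    rw [bpt_eq_cos_add_sin]
    simp only [Complex.real_smul, mul_one, Complex.ofReal_neg]
    linear_combination (Real.sin θ : ℂ) * Complex.I_sq
  rw [hI, bpt_eq_cos_add_sin]
  simp only [map_add, map_smul, add_apply, smul_apply, smul_eq_mul]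
  linear_combination (H 1 1 + H Complex.I Complex.I) * Real.sin_sq_add_cos_sq θ

lemma ContinuousOn.comp_polar {X : Type*} [TopologicalSpace X] {g : ℂ → X}
    (hg : ContinuousOn g cdisc) :
    ContinuousOn (fun p : ℝ × ℝ => g (p.1 * bpt p.2)) (Icc (-1) 1 ×ˢ univ) :=
  hg.comp ((Complex.continuous_ofReal.comp continuous_fst).mul
    (contDiff_bpt.continuous.comp continuous_snd)).continuousOn
    fun p hp => ofReal_mul_bpt_mem_cdisc (abs_le.2 hp.1) p.2

/-- In polar coordinates `r Δw = ∂_r (r ∂_r w) + ∂_θ (r⁻¹ ∂_θ w)`; `lapRadial` and `lapAngular`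
are the two terms, written with the derivatives of `w` on the disc. -/
def lapRadial (w : ℂ → ℝ) (p : ℝ × ℝ) : ℝ :=
  fderivWithin ℝ w cdisc (p.1 * bpt p.2) (bpt p.2) +
    p.1 * fderivWithin ℝ (fderivWithin ℝ w cdisc) cdisc (p.1 * bpt p.2) (bpt p.2) (bpt p.2)

def lapAngular (w : ℂ → ℝ) (p : ℝ × ℝ) : ℝ :=
  p.1 * fderivWithin ℝ (fderivWithin ℝ w cdisc) cdisc (p.1 * bpt p.2)
      (Complex.I * bpt p.2) (Complex.I * bpt p.2) -
    fderivWithin ℝ w cdisc (p.1 * bpt p.2) (bpt p.2)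

lemma continuousOn_nder {w : ℂ → ℝ} (hw : ContDiffOn ℝ 1 w cdisc) : ContinuousOn (nder w) cdisc :=
  (hw.continuousOn_fderivWithin uniqueDiffOn_cdisc le_rfl).clm_apply continuousOn_id

section Green

variable {w : ℂ → ℝ} (hw : ContDiffOn ℝ 2 w cdisc)
include hw

lemma contDiffOn_fderivWithin_cdisc : ContDiffOn ℝ 1 (fderivWithin ℝ w cdisc) cdisc :=
  hw.fderivWithin uniqueDiffOn_cdisc (by norm_num)

lemma continuousOn_fderivWithin_fderivWithin_cdisc :
    ContinuousOn (fderivWithin ℝ (fderivWithin ℝ w cdisc) cdisc) cdisc :=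
  (contDiffOn_fderivWithin_cdisc hw).continuousOn_fderivWithin uniqueDiffOn_cdisc le_rfl

lemma hasFDerivAt_fderivWithin_cdisc {z : ℂ} (hz : z ∈ odisc) :
    HasFDerivAt (fderivWithin ℝ w cdisc)
      (fderivWithin ℝ (fderivWithin ℝ w cdisc) cdisc z) z :=
  ((contDiffOn_fderivWithin_cdisc hw).differentiableOn one_ne_zero z
    (odisc_subset_cdisc hz)).hasFDerivWithinAt.hasFDerivAt
    (mem_of_superset (isOpen_ball.mem_nhds hz) odisc_subset_cdisc)

lemma lapW_eq_trace {z : ℂ} (hz : z ∈ cdisc) :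
    lapW w z = fderivWithin ℝ (fderivWithin ℝ w cdisc) cdisc z 1 1 +
      fderivWithin ℝ (fderivWithin ℝ w cdisc) cdisc z Complex.I Complex.I := by
  have hdiff := (contDiffOn_fderivWithin_cdisc hw).differentiableOn one_ne_zero z hz
  rw [lapW, fderivWithin_clm_apply (uniqueDiffOn_cdisc z hz) hdiff
      (differentiableWithinAt_const 1),
    fderivWithin_clm_apply (uniqueDiffOn_cdisc z hz) hdiff
      (differentiableWithinAt_const Complex.I)]
  simp

lemma continuousOn_lapW : ContinuousOn (lapW w) cdisc := by
  have hH := continuousOn_fderivWithin_fderivWithin_cdisc hw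
  refine ContinuousOn.congr ?_ fun z hz => lapW_eq_trace hw hz
  exact ((hH.clm_apply continuousOn_const).clm_apply continuousOn_const).add
    ((hH.clm_apply continuousOn_const).clm_apply continuousOn_const)

lemma continuousOn_lapRadial : ContinuousOn (lapRadial w) (Icc (-1) 1 ×ˢ univ) := by
  have hD := (contDiffOn_fderivWithin_cdisc hw).continuousOn.comp_polar
  have hH := (continuousOn_fderivWithin_fderivWithin_cdisc hw).comp_polar
  have he : Continuous fun p : ℝ × ℝ => bpt p.2 := contDiff_bpt.continuous.comp continuous_snd
  exact (hD.clm_apply he.continuousOn).add (continuous_fst.continuousOn.mul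
    ((hH.clm_apply he.continuousOn).clm_apply he.continuousOn))

lemma continuousOn_lapAngular : ContinuousOn (lapAngular w) (Icc (-1) 1 ×ˢ univ) := by
  have hD := (contDiffOn_fderivWithin_cdisc hw).continuousOn.comp_polar
  have hH := (continuousOn_fderivWithin_fderivWithin_cdisc hw).comp_polar
  have he : Continuous fun p : ℝ × ℝ => bpt p.2 := contDiff_bpt.continuous.comp continuous_snd
  have hIe : Continuous fun p : ℝ × ℝ => Complex.I * bpt p.2 := continuous_const.mul he
  exact (continuous_fst.continuousOn.mul ((hH.clm_apply hIe.continuousOn).clm_apply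
    hIe.continuousOn)).sub (hD.clm_apply he.continuousOn)

lemma mul_lapW_eq_lapRadial_add_lapAngular (p : ℝ × ℝ) (hp : p ∈ Icc (-1) 1 ×ˢ univ) :
    p.1 * lapW w (p.1 * bpt p.2) = lapRadial w p + lapAngular w p := by
  rw [lapW_eq_trace hw (ofReal_mul_bpt_mem_cdisc (abs_le.2 hp.1) p.2),
    ← bilinear_diag_bpt_add _ p.2, lapRadial, lapAngular]
  ring

lemma hasDerivAt_radial {r : ℝ} (hr : |r| < 1) (θ : ℝ) :
    HasDerivAt (fun s : ℝ => s * fderivWithin ℝ w cdisc ((s : ℂ) * bpt θ) (bpt θ))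
      (lapRadial w (r, θ)) r := by
  have hγ : HasDerivAt (fun s : ℝ => (s : ℂ) * bpt θ) (bpt θ) r := by
    simpa using (Complex.ofRealCLM.hasDerivAt (x := r)).mul_const (bpt θ)
  have hD := (hasFDerivAt_fderivWithin_cdisc hw (ofReal_mul_bpt_mem_odisc hr θ)).comp_hasDerivAt
    r hγ
  have hprod := (hasDerivAt_id' r).mul (hD.clm_apply (hasDerivAt_const r (bpt θ)))
  exact hprod.congr_deriv (by simp [lapRadial])

lemma hasDerivAt_angular {r : ℝ} (hr : |r| < 1) (θ : ℝ) :
    HasDerivAt (fun φ : ℝ => fderivWithin ℝ w cdisc ((r : ℂ) * bpt φ) (Complex.I * bpt φ))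
      (lapAngular w (r, θ)) θ := by
  have hγ : HasDerivAt (fun φ : ℝ => (r : ℂ) * bpt φ) (r • (Complex.I * bpt θ)) θ := by
    rw [Complex.real_smul]
    exact (hasDerivAt_bpt θ).const_mul (r : ℂ)
  have hv : HasDerivAt (fun φ : ℝ => Complex.I * bpt φ) (-bpt θ) θ := by
    refine ((hasDerivAt_bpt θ).const_mul Complex.I).congr_deriv ?_
    linear_combination (bpt θ) * Complex.I_sq
  have hD := (hasFDerivAt_fderivWithin_cdisc hw (ofReal_mul_bpt_mem_odisc hr θ)).comp_hasDerivAt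
    θ hγ
  exact (hD.clm_apply hv).congr_deriv (by
    rw [map_smul, smul_apply, map_neg, smul_eq_mul, lapAngular, sub_eq_add_neg]
    rfl)

lemma integral_lapRadial (θ : ℝ) : ∫ r in Ioo 0 1, lapRadial w (r, θ) = nder w (bpt θ) := by
  have hsub : Icc (0 : ℝ) 1 ⊆ Icc (-1) 1 := Icc_subset_Icc (by norm_num) le_rfl
  have hflux : ContinuousOn (fun s : ℝ => s * fderivWithin ℝ w cdisc ((s : ℂ) * bpt θ) (bpt θ))
      (Icc 0 1) :=
    continuousOn_id.mul ((((contDiffOn_fderivWithin_cdisc hw).continuousOn.comp_polar.slice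
      (mem_univ θ)).clm_apply continuousOn_const).mono hsub)
  have hint : IntervalIntegrable (fun r => lapRadial w (r, θ)) volume 0 1 :=
    (((continuousOn_lapRadial hw).slice (mem_univ θ)).mono hsub).intervalIntegrable_of_Icc
      zero_le_one
  rw [← integral_Ioc_eq_integral_Ioo, ← intervalIntegral.integral_of_le zero_le_one,
    intervalIntegral.integral_eq_sub_of_hasDerivAt_of_le zero_le_one hflux
      (fun r hr => hasDerivAt_radial hw (abs_lt.2 ⟨by linarith [hr.1], hr.2⟩) θ) hint]
  simp [nder]

lemma integral_lapAngular {r : ℝ} (hr : |r| < 1) :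
    ∫ θ in Ioo (-π) π, lapAngular w (r, θ) = 0 := by
  have hcont : Continuous fun θ => lapAngular w (r, θ) :=
    (continuousOn_lapAngular hw).comp_continuous (continuous_const.prodMk continuous_id)
      fun _ => ⟨abs_le.1 hr.le, mem_univ _⟩
  rw [← integral_Ioc_eq_integral_Ioo,
    ← intervalIntegral.integral_of_le (neg_le_self Real.pi_pos.le),
    intervalIntegral.integral_eq_sub_of_hasDerivAt (fun θ _ => hasDerivAt_angular hw hr θ)
      (hcont.intervalIntegrable _ _), bpt_neg_pi, sub_self]

theorem integral_lapW_eq_integral_nder :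
    ∫ z in odisc, lapW w z = ∫ θ in (0 : ℝ)..(2 * π), nder w (bpt θ) := by
  set R := Ioo (0 : ℝ) 1 ×ˢ Ioo (-π) π
  have hR : R ⊆ Icc (-1) 1 ×ˢ univ :=
    prod_mono (Ioo_subset_Icc_self.trans (Icc_subset_Icc (by norm_num) le_rfl)) (subset_univ _)
  have hint : ∀ g : ℝ × ℝ → ℝ, ContinuousOn g (Icc (-1) 1 ×ˢ univ) → IntegrableOn g R :=
    fun g hg => ((hg.mono (prod_mono (Icc_subset_Icc (by norm_num) le_rfl) (subset_univ _))
      ).integrableOn_compact (isCompact_Icc.prod isCompact_Icc)).mono_set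
      (prod_mono Ioo_subset_Icc_self Ioo_subset_Icc_self)
  have hradial := hint _ (continuousOn_lapRadial hw)
  have hangular := hint _ (continuousOn_lapAngular hw)
  have hfubini_radial : ∫ p in R, lapRadial w p = ∫ θ in Ioo (-π) π, nder w (bpt θ) := by
    rw [Measure.volume_eq_prod, ← Measure.prod_restrict,
      integral_prod_symm _ (by rw [Measure.prod_restrict]; exact hradial)]
    exact setIntegral_congr_fun measurableSet_Ioo fun θ _ => integral_lapRadial hw θ
  have hfubini_angular : ∫ p in R, lapAngular w p = 0 := by
    rw [Measure.volume_eq_prod, setIntegral_prod _ hangular,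
      setIntegral_congr_fun measurableSet_Ioo fun r hr =>
        integral_lapAngular hw (abs_lt.2 ⟨by linarith [hr.1], hr.2⟩)]
    simp
  calc ∫ z in odisc, lapW w z = ∫ p in R, p.1 * lapW w (p.1 * bpt p.2) :=
        setIntegral_odisc_eq_polar _
    _ = ∫ p in R, (lapRadial w p + lapAngular w p) :=
        setIntegral_congr_fun (measurableSet_Ioo.prod measurableSet_Ioo) fun p hp =>
          mul_lapW_eq_lapRadial_add_lapAngular hw p (hR hp)
    _ = ∫ θ in Ioo (-π) π, nder w (bpt θ) := by
        rw [integral_add hradial hangular, hfubini_radial, hfubini_angular, add_zero]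
    _ = ∫ θ in (0 : ℝ)..(2 * π), nder w (bpt θ) := by
        rw [← integral_Ioc_eq_integral_Ioo,
          ← intervalIntegral.integral_of_le (neg_le_self Real.pi_pos.le)]
        have h := (bpt_periodic.comp (nder w)).intervalIntegral_add_eq (-π) 0
        rwa [zero_add, show -π + 2 * π = π by ring] at h

end Green

section Flow

variable {u : ℂ → ℝ → ℝ} {Ω : Set ℝ} {t : ℝ}

lemma hasDerivAt_ballInt_exp (hΩ : IsOpen Ω)
    (hu : ContDiffOn ℝ 1 (fun p : ℂ × ℝ => u p.1 p.2) (cdisc ×ˢ Ω)) (ht : t ∈ Ω) :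
    HasDerivAt (fun s => ballInt fun z => Real.exp (2 * u z s))
      (ballInt fun z => 2 * deriv (u z) t * Real.exp (2 * u z t)) t := by
  have hexp : ContDiffOn ℝ 1 (fun p : ℂ × ℝ => Real.exp (2 * u p.1 p.2)) (cdisc ×ˢ Ω) :=
    Real.contDiff_exp.comp_contDiffOn (contDiffOn_const.mul hu)
  refine (hasDerivAt_setIntegral_of_contDiffOn isCompact_cdisc uniqueDiffOn_cdisc
    measurableSet_odisc odisc_subset_cdisc hΩ hexp ht).congr_deriv
    (setIntegral_congr_fun measurableSet_odisc fun z hz => ?_)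
  have hd := hasDerivAt_of_contDiffOn_prod hΩ hu (odisc_subset_cdisc hz) ht
  rw [((hd.const_mul 2).exp).deriv, hd.deriv]
  ring

lemma hasDerivAt_circInt_exp (hΩ : IsOpen Ω)
    (hu : ContDiffOn ℝ 1 (fun p : ℂ × ℝ => u p.1 p.2) (cdisc ×ˢ Ω)) (ht : t ∈ Ω) :
    HasDerivAt (fun s => circInt fun z => Real.exp (u z s))
      (circInt fun z => deriv (u z) t * Real.exp (u z t)) t := by
  have hexp : ContDiffOn ℝ 1 (fun p : ℝ × ℝ => Real.exp (u (bpt p.1) p.2)) (Icc 0 (2 * π) ×ˢ Ω) :=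
    Real.contDiff_exp.comp_contDiffOn (hu.comp (((contDiff_bpt.comp contDiff_fst).prodMk
      contDiff_snd).of_le le_top).contDiffOn fun p hp => ⟨bdry_subset_cdisc (bpt_mem_bdry _), hp.2⟩)
  simp only [circInt, intervalIntegral.integral_of_le Real.two_pi_pos.le]
  refine (hasDerivAt_setIntegral_of_contDiffOn isCompact_Icc (uniqueDiffOn_Icc Real.two_pi_pos)
    measurableSet_Ioc Ioc_subset_Icc_self hΩ hexp ht).congr_deriv
    (setIntegral_congr_fun measurableSet_Ioc fun θ _ => ?_)
  have hd := hasDerivAt_of_contDiffOn_prod hΩ hu (bdry_subset_cdisc (bpt_mem_bdry θ)) ht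
  rw [hd.exp.deriv, hd.deriv, mul_comm]

variable {f j : ℂ → ℝ} {ρ : ℝ → ℝ}

lemma ballInt_deriv_mul_exp_eq (hf : ContinuousOn f cdisc) (hfpos : ∀ z ∈ cdisc, 0 < f z)
    (hu : ContDiffOn ℝ 2 (fun z => u z t) cdisc)
    (hpde : ∀ z ∈ odisc, deriv (u z) t =
      alphaC f u ρ t * f z + Real.exp (-(2 * u z t)) * lapW (fun w => u w t) z) :
    ballInt (fun z => 2 * deriv (u z) t * Real.exp (2 * u z t)) =
      2 * (2 * ρ t + ∫ z in odisc, lapW (fun w => u w t) z) := by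
  have hexp : ContinuousOn (fun z => Real.exp (2 * u z t)) cdisc :=
    Real.continuous_exp.comp_continuousOn (continuousOn_const.mul hu.continuousOn)
  have hmass : alphaC f u ρ t * ∫ z in odisc, f z * Real.exp (2 * u z t) = 2 * ρ t :=
    div_mul_cancel₀ _ (ballInt_pos (hf.mul hexp) fun z hz =>
      mul_pos (hfpos z (odisc_subset_cdisc hz)) (Real.exp_pos _)).ne'
  have hpointwise : ∀ z ∈ odisc, 2 * deriv (u z) t * Real.exp (2 * u z t) =
      2 * alphaC f u ρ t * (f z * Real.exp (2 * u z t)) + 2 * lapW (fun w => u w t) z := by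
    intro z hz
    have hinv : Real.exp (-(2 * u z t)) * Real.exp (2 * u z t) = 1 := by
      rw [← Real.exp_add, neg_add_cancel, Real.exp_zero]
    rw [hpde z hz]
    linear_combination 2 * lapW (fun w => u w t) z * hinv
  rw [ballInt, setIntegral_congr_fun measurableSet_odisc hpointwise,
    integral_add (f := fun z => 2 * alphaC f u ρ t * (f z * Real.exp (2 * u z t)))
      (g := fun z => 2 * lapW (fun w => u w t) z)
      ((hf.mul hexp).integrableOn_odisc.const_mul _)
      ((continuousOn_lapW hu).integrableOn_odisc.const_mul _),
    integral_const_mul, integral_const_mul]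
  linear_combination 2 * hmass

lemma circInt_deriv_mul_exp_eq (hj : ContinuousOn j bdry) (hjpos : ∀ z ∈ bdry, 0 < j z)
    (hu : ContDiffOn ℝ 1 (fun z => u z t) cdisc)
    (hpde : ∀ z ∈ bdry, deriv (u z) t =
      betaC j u ρ t * j z - Real.exp (-(u z t)) * (nder (fun w => u w t) z + 1)) :
    circInt (fun z => deriv (u z) t * Real.exp (u z t)) =
      2 * (π - ρ t) - (∫ θ in (0 : ℝ)..(2 * π), nder (fun w => u w t) (bpt θ)) - 2 * π := by
  have hexp : ContinuousOn (fun z => Real.exp (u z t)) bdry :=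
    Real.continuous_exp.comp_continuousOn (hu.continuousOn.mono bdry_subset_cdisc)
  have hmass : betaC j u ρ t * ∫ θ in (0 : ℝ)..(2 * π), j (bpt θ) * Real.exp (u (bpt θ) t) =
      2 * (π - ρ t) :=
    div_mul_cancel₀ _ (circInt_pos (hj.mul hexp) fun z hz =>
      mul_pos (hjpos z hz) (Real.exp_pos _)).ne'
  have hpointwise : ∀ θ : ℝ, deriv (u (bpt θ)) t * Real.exp (u (bpt θ) t) =
      betaC j u ρ t * (j (bpt θ) * Real.exp (u (bpt θ) t)) -
        (nder (fun w => u w t) (bpt θ) + 1) := by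
    intro θ
    have hinv : Real.exp (-(u (bpt θ) t)) * Real.exp (u (bpt θ) t) = 1 := by
      rw [← Real.exp_add, neg_add_cancel, Real.exp_zero]
    rw [hpde _ (bpt_mem_bdry θ)]
    linear_combination -(nder (fun w => u w t) (bpt θ) + 1) * hinv
  have hnder : Continuous fun θ => nder (fun w => u w t) (bpt θ) :=
    ((continuousOn_nder hu).mono bdry_subset_cdisc).comp_bpt
  rw [circInt, intervalIntegral.integral_congr fun θ _ => hpointwise θ,
    intervalIntegral.integral_sub
      (f := fun θ => betaC j u ρ t * (j (bpt θ) * Real.exp (u (bpt θ) t)))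
      (g := fun θ => nder (fun w => u w t) (bpt θ) + 1)
      (((hj.mul hexp).comp_bpt.intervalIntegrable _ _).const_mul _)
      ((hnder.add continuous_const).intervalIntegrable _ _),
    intervalIntegral.integral_const_mul,
    intervalIntegral.integral_add (hnder.intervalIntegrable _ _) intervalIntegrable_const,
    intervalIntegral.integral_const, hmass, smul_eq_mul]
  ring

end Flow

theorem flow_volume_conserved_general (f j : ℂ → ℝ)
    (hf : ContDiffOn ℝ (⊤ : ℕ∞) f cdisc) (hfpos : ∀ z ∈ cdisc, 0 < f z)
    (hj : ContDiffOn ℝ (⊤ : ℕ∞) j bdry) (hjpos : ∀ z ∈ bdry, 0 < j z)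
    (T : ℝ≥0∞) (u : ℂ → ℝ → ℝ) (ρ : ℝ → ℝ)
    (hflow : IsFlow f j T u ρ) :
    ∀ t : ℝ, 0 < t → ENNReal.ofReal t < T →
      HasDerivAt
        (fun s => (1 / 2) * ballInt (fun z => Real.exp (2 * u z s)) +
          circInt (fun z => Real.exp (u z s)))
        0 t := by
  obtain ⟨hu, -, -, hinterior, hboundary, -⟩ := hflow
  intro t ht htT
  set Ω : Set ℝ := Ioi 0 ∩ ENNReal.ofReal ⁻¹' Iio T
  have hΩ : IsOpen Ω := isOpen_Ioi.inter (isOpen_Iio.preimage ENNReal.continuous_ofReal)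
  have htΩ : t ∈ Ω := ⟨ht, htT⟩
  have htdom : t ∈ flowDom T := ⟨ht.le, htT⟩
  have huΩ : ContDiffOn ℝ 2 (fun p : ℂ × ℝ => u p.1 p.2) (cdisc ×ˢ Ω) :=
    (hu.of_le (by norm_cast)).mono (prod_mono subset_rfl fun s hs => ⟨hs.1.le, hs.2⟩)
  have hut : ContDiffOn ℝ 2 (fun z => u z t) cdisc :=
    huΩ.comp (contDiff_id.prodMk contDiff_const).contDiffOn fun _ hz => ⟨hz, htΩ⟩
  have hdisc := hasDerivAt_ballInt_exp hΩ (huΩ.of_le one_le_two) htΩ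
  have hcirc := hasDerivAt_circInt_exp hΩ (huΩ.of_le one_le_two) htΩ
  refine ((hdisc.const_mul (1 / 2)).add hcirc).congr_deriv ?_
  rw [ballInt_deriv_mul_exp_eq hf.continuousOn hfpos hut (hinterior t htdom ht),
    circInt_deriv_mul_exp_eq hj.continuousOn hjpos (hut.of_le one_le_two)
      (hboundary t htdom ht), integral_lapW_eq_integral_nder hut]
  ring

/-- Conservation of the total quantity `m(t) = ½∫_B e^{2u} dz + ∫_{∂B} e^{u} ds₀`
along the prescribed curvature flow. -/
theorem flow_volume_conserved (f j : ℂ → ℝ)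
    (hf : ContDiffOn ℝ (⊤ : ℕ∞) f cdisc) (hfpos : ∀ z ∈ cdisc, 0 < f z)
    (hj : ContDiffOn ℝ (⊤ : ℕ∞) j bdry) (hjpos : ∀ z ∈ bdry, 0 < j z)
    (T : ℝ≥0∞) (hT : 0 < T) (u : ℂ → ℝ → ℝ) (ρ : ℝ → ℝ)
    (hflow : IsFlow f j T u ρ) :
    ∀ t : ℝ, 0 < t → ENNReal.ofReal t < T →
      HasDerivAt
        (fun s => (1 / 2) * ballInt (fun z => Real.exp (2 * u z s)) +
          circInt (fun z => Real.exp (u z s)))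
        0 t :=
  flow_volume_conserved_general f j hf hfpos hj hjpos T u ρ hflow
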